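/- For every integer k ≥ 2 and all positive integers m, n with 2 ≤ m ≤ n, one has f_k(m, n) ≤ f_k(m−1, n); that is, f_k(1,n) ≥ f_k(2,n) ≥ ... ≥ f_k(n,n). -/

import Mathlib

/-- The value `w(i)` (1-based, taking values in `{1,...,n}`) of a permutation
`w ∈ S_n`, with the convention `w(i) = 0` for `i` out of range. -/
def permVal (n : ℕ) (w : Equiv.Perm (Fin n)) (i : ℕ) : ℕ :=
  if h : i - 1 < n then (w ⟨i - 1, h⟩ : ℕ) + 1 else 0

/-- The set of starting indices (1-based) of `k`-descents of `w ∈ S_n`: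
indices `i` with `1 ≤ i ≤ n - k + 1` such that `w(i) > w(i+1) > ⋯ > w(i+k-1)`. -/
def kDescentSet (k n : ℕ) (w : Equiv.Perm (Fin n)) : Finset ℕ :=
  (Finset.Icc 1 (n + 1 - k)).filter
    (fun i => ∀ j < k - 1, permVal n w (i + j + 1) < permVal n w (i + j))

/-- `d_k(I,n)`: the number of permutations of `S_n` whose `k`-descent set is `I`. -/
def dI (k n : ℕ) (I : Finset ℕ) : ℕ :=
  (Finset.univ.filter (fun w : Equiv.Perm (Fin n) => kDescentSet k n w = I)).card

/-- `d_k(I,m,n)`: as `d_k(I,n)` but additionally requiring `w(1) = m`. -/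
def dIm (k : ℕ) (I : Finset ℕ) (m n : ℕ) : ℕ :=
  (Finset.univ.filter
    (fun w : Equiv.Perm (Fin n) => kDescentSet k n w = I ∧ permVal n w 1 = m)).card

/-- `f_k(n) = d_k(∅, n)`, the number of `k`-descent-avoiding permutations in `S_n`. -/
def fK (k n : ℕ) : ℕ := dI k n ∅

/-- `f_k(m,n) = d_k(∅, m, n)`. -/
def fKm (k m n : ℕ) : ℕ := dIm k ∅ m n

/-!
Exchanging the values `m` and `m - 1` maps `{w : w(1) = m}` injectively into
`{w : w(1) = m - 1}`. It changes the relative order of exactly one pair of positions,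
namely position `1` and the position carrying `m - 1`. An ascent `w(i) < w(i+1)` has its larger
entry at position `i + 1 ≥ 2`, which never carries `m`, so every ascent survives the exchange;
since a `k`-descent is a run with no ascent, no `k`-descent is created.
-/

theorem Equiv.swap_lt_swap_of_lt {α : Type*} [LinearOrder α] {a b u v : α}
    (hba : b ⋖ a) (huv : u < v) (hva : v ≠ a) : swap a b u < swap a b v := by
  rcases eq_or_ne u a with rfl | hua
  · have hbv : b < v := hba.lt.trans huv
    rwa [swap_apply_left, swap_apply_of_ne_of_ne hva hbv.ne']
  rcases eq_or_ne u b with rfl | hub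
  · have hav : a < v := lt_of_le_of_ne (hba.ge_of_gt huv) hva.symm
    rwa [swap_apply_right, swap_apply_of_ne_of_ne hva huv.ne']
  rw [swap_apply_of_ne_of_ne hua hub]
  rcases eq_or_ne v b with rfl | hvb
  · rw [swap_apply_right]
    exact huv.trans hba.lt
  · rwa [swap_apply_of_ne_of_ne hva hvb]

theorem permVal_succ {n i : ℕ} (w : Equiv.Perm (Fin n)) (hi : i < n) :
    permVal n w (i + 1) = w ⟨i, hi⟩ + 1 := by
  simp [permVal, hi]

theorem kDescentSet_subset_of_ascents {k n : ℕ} {w w' : Equiv.Perm (Fin n)}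
    (h : ∀ p q : Fin n, (p : ℕ) + 1 = q → w p < w q → w' p < w' q) :
    kDescentSet k n w' ⊆ kDescentSet k n w := by
  intro i hi
  simp only [kDescentSet, Finset.mem_filter, Finset.mem_Icc] at hi ⊢
  refine ⟨hi.1, fun j hj => ?_⟩
  by_contra hasc
  obtain ⟨l, hl⟩ : ∃ l, i + j = l + 1 := ⟨i + j - 1, by omega⟩
  have hl1 : l + 1 < n := by omega
  have hdesc := hi.2 j hj
  rw [hl, permVal_succ w' hl1, permVal_succ w' (by omega)] at hdesc
  rw [hl, permVal_succ w hl1, permVal_succ w (by omega), not_lt, add_le_add_iff_right] at hasc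
  have hlt : w ⟨l, _⟩ < w ⟨l + 1, hl1⟩ :=
    lt_of_le_of_ne hasc (w.injective.ne (by simp))
  have hlt' := Fin.lt_def.mp (h _ _ rfl hlt)
  omega

theorem fKm_antitone_general (k m n : ℕ) (hm : 2 ≤ m) (hmn : m ≤ n) :
    fKm k m n ≤ fKm k (m - 1) n := by
  have hn : 0 < n := by omega
  set a : Fin n := ⟨m - 1, by omega⟩
  set b : Fin n := ⟨m - 2, by omega⟩
  have hba : b ⋖ a := ⟨Fin.mk_lt_mk.2 (by omega), fun c hbc hca => by
    rw [Fin.lt_def] at hbc hca; simp only [a, b] at hbc hca; omega⟩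
  refine Finset.card_le_card_of_injOn (Equiv.swap a b * ·) (fun w hw => ?_)
    (mul_right_injective _).injOn
  simp only [Finset.coe_filter, Finset.mem_univ, true_and, Set.mem_ofPred_eq] at hw ⊢
  obtain ⟨hdes, hw1⟩ := hw
  rw [permVal_succ w hn] at hw1
  have hw0 : w ⟨0, hn⟩ = a := Fin.ext (by simp only [a]; omega)
  refine ⟨Finset.subset_empty.mp (hdes ▸ kDescentSet_subset_of_ascents fun p q hpq hlt => ?_), ?_⟩
  · have hwq : w q ≠ a := hw0 ▸ w.injective.ne (by rw [ne_eq, Fin.ext_iff]; simp only; omega)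
    exact Equiv.swap_lt_swap_of_lt hba hlt hwq
  · rw [permVal_succ _ hn, Equiv.Perm.mul_apply, hw0, Equiv.swap_apply_left]
    simp only [b]
    omega

/-- Proposition: monotonicity. For `k ≥ 2` and `2 ≤ m ≤ n`,
`f_k(m,n) ≤ f_k(m-1,n)`; that is, `f_k(1,n) ≥ f_k(2,n) ≥ ⋯ ≥ f_k(n,n)`. -/
theorem fKm_antitone (k m n : ℕ) (hk : 2 ≤ k) (hm : 2 ≤ m) (hmn : m ≤ n) :
    fKm k m n ≤ fKm k (m - 1) n :=
  fKm_antitone_general k m n hm hmn
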